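/- arXiv:1802.07439 — 2 statements merged into one kernel-verified Lean document; each statement's English description precedes it below -/
import Mathlib

section
/- Assume T = Σ_j p_j is a power of 2. Fix an interval I = [s,t] with 0 ≤ s ≤ t < T, let j_1, …, j_k be the jobs of J(I) listed in non-decreasing order of release date, and for each i let S_i be the unique segment of Seg(j_i) containing slot t. Then S_k ⊆ S_{k−1} ⊆ … ⊆ S_1; moreover, for every 1 < i ≤ k, S_{i−1} is the unique segment of Seg(j_{i−1}) that contains S_i (so these job segments form an ancestor-to-descendant path in the tree whose parent relation maps (j_i, S_i) to the segment of the preceding job containing S_i). -/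
/-!
Started at a multiple `u` of `2^s`, stage `s` of `FormSegments` appends aligned dyadic intervals
of length `2^s` and stops at the least multiple of `2^(s+1)` above `u`. Hence every segment is an
aligned dyadic interval, and since that stopping time is monotone in `u`, the segment containing
slot `t` is produced at a later (or the same) stage for an earlier start. Two aligned dyadic
intervals containing `t` are nested, the longer one outside; so the segment of an earlier-released
job containing `t` contains that of a later one, and the case of equal starts gives uniqueness.
-/

/-- The procedure `FormSegments`, starting at stage `s` with current time `t`, stopping
once `t ≥ T`.  Each produced entry `(s, a, b)` records the stage `s` at which the
interval `[a, b]` was appended. -/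
def segAux (T : ℕ) (s t : ℕ) : List (ℕ × ℕ × ℕ) :=
  if h : t < T then
    if 2 ^ (s + 1) ∣ t then
      (s, t, t + 2 ^ s) :: (s, t + 2 ^ s, t + 2 ^ (s + 1)) ::
        segAux T (s + 1) (t + 2 ^ (s + 1))
    else
      (s, t, t + 2 ^ s) :: segAux T (s + 1) (t + 2 ^ s)
  else []
termination_by T - t
decreasing_by
  · have h1 : 0 < 2 ^ (s + 1) := Nat.pow_pos (by norm_num)
    omega
  · have h1 : 0 < 2 ^ s := Nat.pow_pos (by norm_num)
    omega

/-- `Seg T r` : the sequence of intervals of `Seg(r)` (forgetting the stages). -/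
def Seg (T rj : ℕ) : List (ℕ × ℕ) := (segAux T 0 rj).map fun x => (x.2.1, x.2.2)

/-- The time reached after stage `s` of `segAux` started at `u`. -/
def segNext (s u : ℕ) : ℕ := if 2 ^ (s + 1) ∣ u then u + 2 ^ (s + 1) else u + 2 ^ s

theorem lt_segNext (s u : ℕ) : u < segNext s u := by
  unfold segNext
  split_ifs <;> exact Nat.lt_add_of_pos_right (by positivity)

theorem segNext_eq {s u : ℕ} (hu : 2 ^ s ∣ u) :
    segNext s u = (u / 2 ^ (s + 1) + 1) * 2 ^ (s + 1) := by
  unfold segNext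
  split_ifs with h
  · rw [add_mul, one_mul, Nat.div_mul_cancel h]
  · obtain ⟨m, rfl⟩ := hu
    obtain ⟨k, rfl⟩ : Odd m := by
      rw [Nat.odd_iff, ← Nat.two_dvd_ne_zero]
      exact fun hm => h (by rw [pow_succ]; exact mul_dvd_mul_left _ hm)
    rw [pow_succ, Nat.mul_div_mul_left _ _ (by positivity)]
    rw [show (2 * k + 1) / 2 = k by omega]
    ring

theorem dvd_segNext {s u : ℕ} (hu : 2 ^ s ∣ u) : 2 ^ (s + 1) ∣ segNext s u := by
  rw [segNext_eq hu]
  exact Dvd.intro_left _ rfl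

theorem segNext_mono {s u u' : ℕ} (hu : 2 ^ s ∣ u) (hu' : 2 ^ s ∣ u') (h : u ≤ u') :
    segNext s u ≤ segNext s u' := by
  rw [segNext_eq hu, segNext_eq hu']
  gcongr

theorem mem_segAux {T s u : ℕ} {x : ℕ × ℕ × ℕ} (hx : x ∈ segAux T s u) :
    u < T ∧
      ((∃ a, (a = u ∨ a = u + 2 ^ s) ∧ a + 2 ^ s ≤ segNext s u ∧ x = (s, a, a + 2 ^ s)) ∨
        x ∈ segAux T (s + 1) (segNext s u)) := by
  rw [segAux] at hx
  split_ifs at hx with hT hd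
  · simp only [segNext, if_pos hd, List.mem_cons] at hx ⊢
    refine ⟨hT, ?_⟩
    rcases hx with rfl | rfl | hx
    · exact .inl ⟨u, .inl rfl, by rw [pow_succ]; omega, rfl⟩
    · exact .inl ⟨u + 2 ^ s, .inr rfl, by rw [pow_succ]; omega, by rw [pow_succ]; ring_nf⟩
    · exact .inr hx
  · simp only [segNext, if_neg hd, List.mem_cons] at hx ⊢
    refine ⟨hT, ?_⟩
    rcases hx with rfl | hx
    · exact .inl ⟨u, .inl rfl, le_rfl, rfl⟩
    · exact .inr hx
  · simp at hx

theorem segAux_dyadic {T s u : ℕ} (hu : 2 ^ s ∣ u) {x : ℕ × ℕ × ℕ} (hx : x ∈ segAux T s u) :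
    s ≤ x.1 ∧ u ≤ x.2.1 ∧ x.2.2 = x.2.1 + 2 ^ x.1 ∧ 2 ^ x.1 ∣ x.2.1 := by
  obtain ⟨hT, ⟨a, rfl | rfl, -, rfl⟩ | hx⟩ := mem_segAux hx
  · exact ⟨le_rfl, le_rfl, rfl, hu⟩
  · exact ⟨le_rfl, Nat.le_add_right _ _, rfl, dvd_add hu dvd_rfl⟩
  · have := lt_segNext s u
    obtain ⟨hs, hle, hend, hdvd⟩ := segAux_dyadic (dvd_segNext hu) hx
    exact ⟨by omega, by omega, hend, hdvd⟩
termination_by T - u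
decreasing_by have := lt_segNext s u; omega

theorem dyadic_nested {g g' a a' t : ℕ} (hg : g' ≤ g) (ha : 2 ^ g ∣ a) (ha' : 2 ^ g' ∣ a')
    (hat : a ≤ t ∧ t < a + 2 ^ g) (ha't : a' ≤ t ∧ t < a' + 2 ^ g') :
    a ≤ a' ∧ a' + 2 ^ g' ≤ a + 2 ^ g := by
  have add_le {x y : ℕ} (hx : 2 ^ g' ∣ x) (hy : 2 ^ g' ∣ y) (h : x < y) : x + 2 ^ g' ≤ y := by
    have := Nat.le_of_dvd (by omega) (Nat.dvd_sub hy hx)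
    omega
  have hg' : 2 ^ g' ∣ 2 ^ g := pow_dvd_pow 2 hg
  constructor
  · by_contra! h
    have := add_le ha' (hg'.trans ha) h
    omega
  · exact add_le ha' (dvd_add (hg'.trans ha) hg') (by omega)

theorem segAux_nested {T s u u' t : ℕ} (hu : 2 ^ s ∣ u) (hu' : 2 ^ s ∣ u') (huu' : u ≤ u')
    {x x' : ℕ × ℕ × ℕ} (hx : x ∈ segAux T s u) (hx' : x' ∈ segAux T s u')
    (hxt : x.2.1 ≤ t ∧ t < x.2.2) (hx't : x'.2.1 ≤ t ∧ t < x'.2.2) :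
    x.2.1 ≤ x'.2.1 ∧ x'.2.2 ≤ x.2.2 := by
  obtain ⟨-, hcases⟩ := mem_segAux hx
  obtain ⟨-, hcases'⟩ := mem_segAux hx'
  by_cases hnext : segNext s u' ≤ t
  · -- both runs are past stage `s` by slot `t`, so neither segment is a stage-`s` one
    have hmono := segNext_mono hu hu' huu'
    rcases hcases with ⟨a, -, ha, rfl⟩ | hx
    · simp only at hxt; omega
    rcases hcases' with ⟨a', -, ha', rfl⟩ | hx'
    · simp only at hx't; omega
    exact segAux_nested (dvd_segNext hu) (dvd_segNext hu') hmono hx hx' hxt hx't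
  · -- `x'` is a stage-`s` segment, and `x` has stage at least `s`
    rcases hcases' with ⟨a', ha', -, rfl⟩ | hx'
    · obtain ⟨hs, -, hend, hdvd⟩ := segAux_dyadic hu hx
      rw [hend] at hxt ⊢
      have hdvd' : 2 ^ s ∣ a' := ha'.elim (· ▸ hu') (· ▸ dvd_add hu' dvd_rfl)
      exact dyadic_nested hs hdvd hdvd' hxt hx't
    · have := (segAux_dyadic (dvd_segNext hu') hx').2.1
      omega
termination_by t - u'
decreasing_by have := lt_segNext s u'; omega

theorem Seg_nested {T u u' t : ℕ} (huu' : u ≤ u') {I I' : ℕ × ℕ}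
    (hI : I ∈ Seg T u) (hI' : I' ∈ Seg T u') (hIt : I.1 ≤ t ∧ t < I.2)
    (hI't : I'.1 ≤ t ∧ t < I'.2) : I.1 ≤ I'.1 ∧ I'.2 ≤ I.2 := by
  obtain ⟨x, hx, rfl⟩ := List.mem_map.1 hI
  obtain ⟨x', hx', rfl⟩ := List.mem_map.1 hI'
  exact segAux_nested (by simp) (by simp) huu' hx hx' hIt hI't

theorem Seg_eq_of_mem {T u t : ℕ} {I I' : ℕ × ℕ} (hI : I ∈ Seg T u)
    (hI' : I' ∈ Seg T u) (hIt : I.1 ≤ t ∧ t < I.2) (hI't : I'.1 ≤ t ∧ t < I'.2) : I = I' := by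
  have h := Seg_nested le_rfl hI hI' hIt hI't
  have h' := Seg_nested le_rfl hI' hI hI't hIt
  exact Prod.ext (le_antisymm h.1 h'.1) (le_antisymm h'.2 h.2)

theorem stmt9_general {J : Type} (r : J → ℕ) (ℓ : ℕ) (t : ℕ) (js : List J)
    (hsort : js.Pairwise fun j j' => r j ≤ r j')
    (S : ℕ → ℕ × ℕ)
    (hS : ∀ i (hi : i < js.length),
      S i ∈ Seg (2 ^ ℓ) (r (js.get ⟨i, hi⟩)) ∧ (S i).1 ≤ t ∧ t + 1 ≤ (S i).2) :
    (∀ i i', i ≤ i' → i' < js.length → (S i).1 ≤ (S i').1 ∧ (S i').2 ≤ (S i).2) ∧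
    (∀ i (hi : i + 1 < js.length),
      ∀ S' ∈ Seg (2 ^ ℓ) (r (js.get ⟨i, Nat.lt_of_succ_lt hi⟩)),
        S'.1 ≤ (S (i + 1)).1 → (S (i + 1)).2 ≤ S'.2 → S' = S i) := by
  refine ⟨fun i i' hii' hi' => ?_, fun i hi S' hS' hS'1 hS'2 => ?_⟩
  · have hi := hii'.trans_lt hi'
    have hr : r (js.get ⟨i, hi⟩) ≤ r (js.get ⟨i', hi'⟩) := by
      rcases hii'.eq_or_lt with rfl | h
      · rfl
      · exact hsort.rel_get_of_lt (a := ⟨i, hi⟩) (b := ⟨i', hi'⟩) h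
    exact Seg_nested hr (hS i hi).1 (hS i' hi').1 (hS i hi).2 (hS i' hi').2
  · have hi' : i < js.length := Nat.lt_of_succ_lt hi
    have hnext := (hS (i + 1) hi).2
    exact Seg_eq_of_mem hS' (hS i hi').1
      ⟨hS'1.trans hnext.1, Nat.lt_of_lt_of_le hnext.2 hS'2⟩ (hS i hi').2

/-- suppose `T = ∑_j p_j = 2^ℓ`.  Fix an interval `I = [s,t]` with
`0 ≤ s ≤ t < T`, let `j_1, …, j_k` be the jobs of `J(I)` listed in non-decreasing
order of release date (`js` enumerates `J(I)` without repetition, sorted by release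
date), and let `S i` be the segment of `Seg(r (js_i))` containing slot `t`.  Then
`S_k ⊆ S_{k-1} ⊆ ⋯ ⊆ S_1`, and for each `i`, `S_i` is the unique segment of
`Seg(r (js_i))` containing `S_{i+1}`. -/
theorem stmt9 {J : Type} [Fintype J] [DecidableEq J] (p r : J → ℕ) (w : J → ℚ)
    (hp : ∀ j, 1 ≤ p j) (hw : ∀ j, 0 ≤ w j)
    (ℓ : ℕ) (hT : ∑ j, p j = 2 ^ ℓ) (hrT : ∀ j, r j < 2 ^ ℓ)
    (hbusy : ∀ t : ℕ, 1 ≤ t → t ≤ 2 ^ ℓ →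
      t ≤ ∑ j ∈ Finset.univ.filter fun j => r j < t, p j)
    (s t : ℕ) (hst : s ≤ t) (ht : t < 2 ^ ℓ)
    (js : List J) (hnd : js.Nodup)
    (hmem : ∀ j, j ∈ js ↔ (s ≤ r j ∧ r j ≤ t))
    (hsort : js.Pairwise fun j j' => r j ≤ r j')
    (S : ℕ → ℕ × ℕ)
    (hS : ∀ i (hi : i < js.length),
      S i ∈ Seg (2 ^ ℓ) (r (js.get ⟨i, hi⟩)) ∧ (S i).1 ≤ t ∧ t + 1 ≤ (S i).2) :
    (∀ i i', i ≤ i' → i' < js.length → (S i).1 ≤ (S i').1 ∧ (S i').2 ≤ (S i).2) ∧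
    (∀ i (hi : i + 1 < js.length),
      ∀ S' ∈ Seg (2 ^ ℓ) (r (js.get ⟨i, Nat.lt_of_succ_lt hi⟩)),
        S'.1 ≤ (S (i + 1)).1 → (S (i + 1)).2 ≤ S'.2 → S' = S i) :=
  stmt9_general r ℓ t js hsort S hS
end

section
/- Assume T = Σ_j p_j is a power of 2. For every feasible solution y to (IP2) there exists a feasible solution x to (IP1) whose cost is at most 4 times the cost of y. -/
/-- `segOf T rj t` : the (unique) segment of `Seg(rj)` containing slot `t`. -/
def segOf (T rj t : ℕ) : ℕ × ℕ :=
  ((Seg T rj).find? fun S => decide (S.1 ≤ t ∧ t + 1 ≤ S.2)).getD (0, 0)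

/-- (IP1) feasibility for the weighted flow-time integer program. -/
def IP1Feasible {J : Type} [Fintype J] (p r : J → ℕ) (T : ℕ) (x : J → ℕ → ℕ) : Prop :=
  (∀ j t, r j ≤ t → t ≤ T → x j t ≤ 1) ∧
  (∀ j t, r j < t → t ≤ T → x j t ≤ x j (t - 1)) ∧
  (∀ s t : ℕ, s ≤ t → t ≤ T →
    (∑ j ∈ Finset.univ.filter fun j => s ≤ r j ∧ r j ≤ t, (p j : ℤ)) - ((t : ℤ) - (s : ℤ))
      ≤ ∑ j ∈ Finset.univ.filter fun j => s ≤ r j ∧ r j ≤ t, (p j : ℤ) * (x j t : ℤ))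

/-- Cost of an (IP1) solution: `∑_j ∑_{t = r_j}^{T} w_j · x_{j,t}`. -/
def IP1Cost {J : Type} [Fintype J] (w : J → ℚ) (r : J → ℕ) (T : ℕ) (x : J → ℕ → ℕ) : ℚ :=
  ∑ j, ∑ t ∈ Finset.Icc (r j) T, w j * (x j t : ℚ)

/-- (IP2) feasibility: `y j S ∈ {0,1}` for each job segment `(j, S)` with `S ∈ Seg(r j)`,
and for every interval `I = [s,t]` with `0 ≤ s ≤ t < T`,
`∑_{j ∈ J(I)} p j · y (j, S_j(t)) ≥ p(J(I)) − (t − s)`, where `S_j(t)` is the segment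
of `Seg(r j)` containing slot `t`. -/
def IP2Feasible {J : Type} [Fintype J] (p r : J → ℕ) (T : ℕ) (y : J → ℕ × ℕ → ℕ) : Prop :=
  (∀ j S, S ∈ Seg T (r j) → y j S ≤ 1) ∧
  (∀ s t : ℕ, s ≤ t → t < T →
    (∑ j ∈ Finset.univ.filter fun j => s ≤ r j ∧ r j ≤ t, (p j : ℤ)) - ((t : ℤ) - (s : ℤ))
      ≤ ∑ j ∈ Finset.univ.filter fun j => s ≤ r j ∧ r j ≤ t,
          (p j : ℤ) * (y j (segOf T (r j) t) : ℤ))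

/-- Cost of an (IP2) solution: `∑_j ∑_{S ∈ Seg(j)} w_j · l(S) · y (j, S)`. -/
def IP2Cost {J : Type} [Fintype J] (w : J → ℚ) (r : J → ℕ) (T : ℕ)
    (y : J → ℕ × ℕ → ℕ) : ℚ :=
  ∑ j, ((Seg T (r j)).map fun S => w j * ((S.2 - S.1 : ℕ) : ℚ) * (y j S : ℚ)).sum

/-!
Set `x_{j,t} = 1` exactly when some slot `t' ≥ t` lies in a segment of `Seg(j)` selected by `y`.
Then `x` is monotone by construction and dominates `y (j, S_j(t))`, so the interval constraints
of (IP2) carry over for `t < T`; for `t = T` the constraint is implied by the busy-machine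
assumption. For the cost, the segments of `Seg(r)` grow geometrically, so each one ends before
`r` plus four times its length; hence `x_j` vanishes from `r_j + 4 · (total selected length)`
on.
-/

theorem segAux_snd_add_two_le {T rj : ℕ} :
    ∀ s t₀, t₀ + 2 ≤ rj + 2 ^ (s + 1) →
      ∀ e ∈ segAux T s t₀, e.2.2 + 2 ≤ rj + 4 * (e.2.2 - e.2.1) := by
  intro s t₀
  induction s, t₀ using segAux.induct T with
  | case1 s t₀ hlt hdvd ih =>
    intro hb e he
    rw [segAux, dif_pos hlt, if_pos hdvd, List.mem_cons, List.mem_cons] at he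
    have h₂ : 2 ^ (s + 2) = 2 * 2 ^ (s + 1) := by ring
    rcases he with rfl | rfl | he
    · dsimp only; rw [pow_succ] at hb; omega
    · dsimp only; rw [pow_succ] at hb ⊢; omega
    · exact ih (by omega) e he
  | case2 s t₀ hlt hdvd ih =>
    intro hb e he
    rw [segAux, dif_pos hlt, if_neg hdvd, List.mem_cons] at he
    have h₂ : 2 ^ (s + 2) = 2 * 2 ^ (s + 1) := by ring
    rcases he with rfl | he
    · dsimp only; rw [pow_succ] at hb; omega
    · exact ih (by rw [pow_succ] at hb; omega) e he
  | case3 s t₀ h =>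
    intro _ e he
    rw [segAux, dif_neg h] at he
    simp at he

theorem Seg_snd_add_two_le {T rj : ℕ} {S : ℕ × ℕ} (hS : S ∈ Seg T rj) :
    S.2 + 2 ≤ rj + 4 * (S.2 - S.1) := by
  obtain ⟨e, he, rfl⟩ := List.mem_map.1 hS
  exact segAux_snd_add_two_le 0 rj (by simp) e he

theorem exists_mem_segAux_of_le_of_lt {T : ℕ} :
    ∀ s t₀ t, t₀ ≤ t → t < T → ∃ e ∈ segAux T s t₀, e.2.1 ≤ t ∧ t + 1 ≤ e.2.2 := by
  intro s t₀
  induction s, t₀ using segAux.induct T with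
  | case1 s t₀ hlt hdvd ih =>
    intro t ht₀ htT
    rw [segAux, dif_pos hlt, if_pos hdvd]
    by_cases h₁ : t < t₀ + 2 ^ s
    · exact ⟨(s, t₀, t₀ + 2 ^ s), by simp, by dsimp only; omega, by dsimp only; omega⟩
    by_cases h₂ : t < t₀ + 2 ^ (s + 1)
    · exact ⟨(s, t₀ + 2 ^ s, t₀ + 2 ^ (s + 1)), by simp, by dsimp only; omega,
        by dsimp only; omega⟩
    obtain ⟨e, he, hc⟩ := ih t (by omega) htT
    exact ⟨e, by simp [he], hc⟩
  | case2 s t₀ hlt hdvd ih =>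
    intro t ht₀ htT
    rw [segAux, dif_pos hlt, if_neg hdvd]
    by_cases h₁ : t < t₀ + 2 ^ s
    · exact ⟨(s, t₀, t₀ + 2 ^ s), by simp, by dsimp only; omega, by dsimp only; omega⟩
    obtain ⟨e, he, hc⟩ := ih t (by omega) htT
    exact ⟨e, by simp [he], hc⟩
  | case3 s t₀ h =>
    intro t ht₀ htT
    omega

theorem segOf_mem_Seg {T rj t : ℕ} (hrt : rj ≤ t) (htT : t < T) :
    segOf T rj t ∈ Seg T rj ∧ (segOf T rj t).1 ≤ t ∧ t + 1 ≤ (segOf T rj t).2 := by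
  obtain ⟨e, he, h₁, h₂⟩ := exists_mem_segAux_of_le_of_lt 0 rj t hrt htT
  obtain ⟨S, hS⟩ : ∃ S, (Seg T rj).find? (fun S => decide (S.1 ≤ t ∧ t + 1 ≤ S.2)) = some S :=
    Option.isSome_iff_exists.mp <| List.find?_isSome.2
      ⟨_, List.mem_map_of_mem he, by simpa using ⟨h₁, h₂⟩⟩
  have hprop := List.find?_some hS
  simp only [decide_eq_true_eq] at hprop
  rw [segOf, hS]
  exact ⟨List.mem_of_find?_eq_some hS, hprop⟩

/-- The (IP2) cost of a job of unit weight. -/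
def segCost (T rj : ℕ) (yj : ℕ × ℕ → ℕ) : ℕ :=
  ((Seg T rj).map fun S => (S.2 - S.1) * yj S).sum

def ip1OfIP2 (T rj : ℕ) (yj : ℕ × ℕ → ℕ) (t : ℕ) : ℕ :=
  if ∃ t' ∈ Finset.Ico t T, yj (segOf T rj t') ≠ 0 then 1 else 0

section ip1OfIP2

variable {T rj : ℕ} {yj : ℕ × ℕ → ℕ}

theorem ip1OfIP2_le_one (t : ℕ) : ip1OfIP2 T rj yj t ≤ 1 := by
  unfold ip1OfIP2; split_ifs <;> omega

theorem antitone_ip1OfIP2 : Antitone (ip1OfIP2 T rj yj) := by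
  intro t t' htt'
  unfold ip1OfIP2
  split_ifs with h' h
  · exact le_rfl
  · obtain ⟨u, hu, hyu⟩ := h'
    exact absurd ⟨u, by simp only [Finset.mem_Ico] at hu ⊢; omega, hyu⟩ h
  · omega
  · exact le_rfl

theorem le_ip1OfIP2 {t : ℕ} (htT : t < T) (hy : yj (segOf T rj t) ≤ 1) :
    yj (segOf T rj t) ≤ ip1OfIP2 T rj yj t := by
  unfold ip1OfIP2
  split_ifs with h
  · exact hy
  · simp only [not_exists, not_and, not_not] at h
    simp [h t (Finset.mem_Ico.2 ⟨le_rfl, htT⟩)]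

theorem length_le_segCost {S : ℕ × ℕ} (hS : S ∈ Seg T rj) (hy : yj S ≠ 0) :
    S.2 - S.1 ≤ segCost T rj yj :=
  calc S.2 - S.1 ≤ (S.2 - S.1) * yj S := Nat.le_mul_of_pos_right _ (Nat.pos_of_ne_zero hy)
    _ ≤ segCost T rj yj := List.single_le_sum (fun _ _ => Nat.zero_le _) _
        (List.mem_map_of_mem (f := fun S => (S.2 - S.1) * yj S) hS)

theorem ip1OfIP2_eq_zero_of_le {t : ℕ} (ht : rj + 4 * segCost T rj yj ≤ t) :
    ip1OfIP2 T rj yj t = 0 := by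
  unfold ip1OfIP2
  rw [if_neg]
  rintro ⟨u, hu, hyu⟩
  simp only [Finset.mem_Ico] at hu
  obtain ⟨hmem, -, hu₂⟩ := segOf_mem_Seg (T := T) (rj := rj) (by omega) hu.2
  have hend := Seg_snd_add_two_le hmem
  have hlen := length_le_segCost hmem hyu
  omega

theorem sum_ip1OfIP2_le (n : ℕ) :
    ∑ t ∈ Finset.Icc rj n, ip1OfIP2 T rj yj t ≤ 4 * segCost T rj yj :=
  calc ∑ t ∈ Finset.Icc rj n, ip1OfIP2 T rj yj t
      = ∑ t ∈ Finset.Icc rj n with t < rj + 4 * segCost T rj yj, ip1OfIP2 T rj yj t := by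
        refine (Finset.sum_filter_of_ne fun t _ h => ?_).symm
        by_contra hle
        exact h (ip1OfIP2_eq_zero_of_le (not_lt.1 hle))
    _ ≤ ∑ t ∈ Finset.Ico rj (rj + 4 * segCost T rj yj), 1 := by
        refine Finset.sum_le_sum_of_subset_of_nonneg (fun t ht => ?_) (fun _ _ _ => Nat.zero_le _)
          |>.trans' (Finset.sum_le_sum fun t _ => ip1OfIP2_le_one t)
        simp only [Finset.mem_filter, Finset.mem_Icc, Finset.mem_Ico] at ht ⊢
        omega
    _ = 4 * segCost T rj yj := by simp

end ip1OfIP2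

section Schedule

variable {J : Type} [Fintype J] (p r : J → ℕ) (T : ℕ)

theorem sum_released_from_le_sub (hT : T = ∑ j, p j)
    (hbusy : ∀ t : ℕ, 1 ≤ t → t ≤ T → t ≤ ∑ j ∈ Finset.univ.filter fun j => r j < t, p j)
    {s : ℕ} (hs : s ≤ T) :
    ∑ j ∈ Finset.univ.filter fun j => s ≤ r j, p j ≤ T - s := by
  rcases Nat.eq_zero_or_pos s with rfl | hs₁
  · rw [hT, Nat.sub_zero]
    exact Finset.sum_le_sum_of_subset (Finset.filter_subset _ _)
  have hsplit := Finset.sum_filter_add_sum_filter_not Finset.univ (fun j => s ≤ r j) p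
  simp only [not_le] at hsplit
  have := hbusy s hs₁ hs
  omega

theorem IP1Feasible_ip1OfIP2 (hT : T = ∑ j, p j)
    (hbusy : ∀ t : ℕ, 1 ≤ t → t ≤ T → t ≤ ∑ j ∈ Finset.univ.filter fun j => r j < t, p j)
    {y : J → ℕ × ℕ → ℕ} (hy : IP2Feasible p r T y) :
    IP1Feasible p r T fun j => ip1OfIP2 T (r j) (y j) := by
  obtain ⟨hy₁, hy₂⟩ := hy
  refine ⟨fun j t _ _ => ip1OfIP2_le_one t,
    fun j t _ _ => antitone_ip1OfIP2 (Nat.sub_le t 1), fun s t hst htT => ?_⟩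
  rcases htT.lt_or_eq with htT | rfl
  · refine (hy₂ s t hst htT).trans (Finset.sum_le_sum fun j hj => ?_)
    have hrt : r j ≤ t := (Finset.mem_filter.1 hj).2.2
    have hyx := le_ip1OfIP2 htT (hy₁ j _ (segOf_mem_Seg hrt htT).1)
    gcongr
  · have hle : ∑ j ∈ Finset.univ.filter fun j => s ≤ r j ∧ r j ≤ t, p j ≤ t - s :=
      (Finset.sum_le_sum_of_subset (Finset.monotone_filter_right _ fun _ _ h => h.1)).trans
        (sum_released_from_le_sub p r t hT hbusy hst)
    have hle' : (∑ j ∈ Finset.univ.filter fun j => s ≤ r j ∧ r j ≤ t, (p j : ℤ))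
        ≤ (t : ℤ) - s := by
      push_cast [← Nat.cast_sum, ← Nat.cast_sub hst]
      exact_mod_cast hle
    have hnonneg : (0 : ℤ) ≤ ∑ j ∈ Finset.univ.filter fun j => s ≤ r j ∧ r j ≤ t,
        (p j : ℤ) * (ip1OfIP2 t (r j) (y j) t : ℤ) := by positivity
    linarith

theorem IP1Cost_ip1OfIP2_le {w : J → ℚ} (hw : ∀ j, 0 ≤ w j) (y : J → ℕ × ℕ → ℕ) :
    IP1Cost w r T (fun j => ip1OfIP2 T (r j) (y j)) ≤ 4 * IP2Cost w r T y := by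
  rw [IP1Cost, IP2Cost, Finset.mul_sum]
  refine Finset.sum_le_sum fun j _ => ?_
  have hcost : ((Seg T (r j)).map fun S => w j * ((S.2 - S.1 : ℕ) : ℚ) * (y j S : ℚ)).sum
      = w j * (segCost T (r j) (y j) : ℚ) := by
    rw [segCost, Nat.cast_list_sum, List.map_map, ← List.sum_map_mul_left]
    congr 1
    exact List.map_congr_left fun S _ => by simp [mul_assoc]
  rw [← Finset.mul_sum, hcost, mul_left_comm]
  gcongr
  · exact hw j
  · exact_mod_cast sum_ip1OfIP2_le T

end Schedule

theorem stmt11_general {J : Type} [Fintype J] (p r : J → ℕ) (w : J → ℚ)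
    (hw : ∀ j, 0 ≤ w j)
    (T : ℕ) (hT : T = ∑ j, p j)
    (hbusy : ∀ t : ℕ, 1 ≤ t → t ≤ T →
      t ≤ ∑ j ∈ Finset.univ.filter fun j => r j < t, p j)
    (y : J → ℕ × ℕ → ℕ) (hy : IP2Feasible p r T y) :
    ∃ x : J → ℕ → ℕ, IP1Feasible p r T x ∧
      IP1Cost w r T x ≤ 4 * IP2Cost w r T y :=
  ⟨_, IP1Feasible_ip1OfIP2 p r T hT hbusy hy, IP1Cost_ip1OfIP2_le r T hw y⟩

/-- if `T = ∑_j p_j` is a power of two, then every feasible solution `y`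
of (IP2) yields a feasible solution `x` of (IP1) of cost at most `4` times the cost
of `y`. -/
theorem stmt11 {J : Type} [Fintype J] (p r : J → ℕ) (w : J → ℚ)
    (hp : ∀ j, 1 ≤ p j) (hw : ∀ j, 0 ≤ w j)
    (ℓ T : ℕ) (hT : T = ∑ j, p j) (hT2 : T = 2 ^ ℓ)
    (hrT : ∀ j, r j < T)
    (hbusy : ∀ t : ℕ, 1 ≤ t → t ≤ T →
      t ≤ ∑ j ∈ Finset.univ.filter fun j => r j < t, p j)
    (y : J → ℕ × ℕ → ℕ) (hy : IP2Feasible p r T y) :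
    ∃ x : J → ℕ → ℕ, IP1Feasible p r T x ∧
      IP1Cost w r T x ≤ 4 * IP2Cost w r T y :=
  stmt11_general p r w hw T hT hbusy y hy
end
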